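/- arXiv:1902.07241 — 2 statements merged into one kernel-verified Lean document; each statement's English description precedes it below -/
import Mathlib

section
/- For every k ≥ 1, the orientation of the path on vertices v_1, v_2, ..., v_{4k+1} in which every even-indexed vertex is a source of out-degree two (i.e., with arcs v_{2j} → v_{2j−1} and v_{2j} → v_{2j+1} for 1 ≤ j ≤ 2k, so the out-degree sequence along the path is {0,2,0,2,...,0,2,0}) admits a dominator coloring using exactly k+2 colors; hence its dominator chromatic number is at most k+2. -/
/-- `c` is a dominator coloring of the digraph with arc relation `A`: a proper coloring of
the underlying undirected graph such that every vertex with at least one out-neighbor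
dominates some (nonempty) color class. -/
def IsDominatorColoring {V : Type*} (A : V → V → Prop) {k : ℕ} (c : V → Fin k) : Prop :=
  (∀ u v, A u v → c u ≠ c v) ∧
    ∀ v, (∃ u, A v u) → ∃ i : Fin k, (∃ u, c u = i) ∧ ∀ u, c u = i → A v u

/-- The dominator chromatic number of a digraph: the least number of colors in a
dominator coloring. -/
noncomputable def domChrom {V : Type*} (A : V → V → Prop) : ℕ :=
  sInf {k | ∃ c : V → Fin k, IsDominatorColoring A c}

/-- `A` is an orientation of the simple graph `G`. -/
def IsOrientation {V : Type*} (G : SimpleGraph V) (A : V → V → Prop) : Prop :=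
  ∀ u v, (G.Adj u v ↔ (A u v ∨ A v u)) ∧ ¬(A u v ∧ A v u)

/-- The minimum dominator chromatic number over all orientations of `G`. -/
noncomputable def minOrientDomChrom {V : Type*} (G : SimpleGraph V) : ℕ :=
  sInf {k | ∃ A : V → V → Prop, IsOrientation G A ∧ ∃ c : V → Fin k, IsDominatorColoring A c}

/-!
Color every odd vertex (the sources) with `1`, every vertex `≡ 2 (mod 4)` with a color of its
own, and the remaining even vertices with `0`. Arcs join odd to even vertices, so the coloring
is proper, and the two out-neighbors `v - 1`, `v + 1` of an odd vertex `v` are consecutive even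
numbers, so one of them is `≡ 2 (mod 4)` and forms a singleton color class dominated by `v`.
-/

theorem IsDominatorColoring.of_singleton_classes {V : Type*} {A : V → V → Prop} {k : ℕ}
    {c : V → Fin k} (hproper : ∀ u v, A u v → c u ≠ c v)
    (hdom : ∀ v, (∃ u, A v u) → ∃ w, A v w ∧ ∀ u, c u = c w → u = w) :
    IsDominatorColoring A c := by
  refine ⟨hproper, fun v hv => ?_⟩
  obtain ⟨w, hvw, hw⟩ := hdom v hv
  exact ⟨c w, ⟨w, rfl⟩, fun u hu => hw u hu ▸ hvw⟩

theorem domChrom_le_of_isDominatorColoring {V : Type*} {A : V → V → Prop} {k : ℕ}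
    {c : V → Fin k} (h : IsDominatorColoring A c) : domChrom A ≤ k :=
  Nat.sInf_le ⟨c, h⟩

def alternatingPathArc (n : ℕ) (i j : Fin n) : Prop :=
  (i : ℕ) % 2 = 1 ∧ ((j : ℕ) + 1 = (i : ℕ) ∨ (j : ℕ) = (i : ℕ) + 1)

theorem exists_alternatingPathArc_mod_four_eq_two {n : ℕ} (v : Fin n) (hv : (v : ℕ) % 2 = 1)
    (hn : n % 2 = 1) :
    ∃ w : Fin n, alternatingPathArc n v w ∧ (w : ℕ) % 4 = 2 := by
  have := v.isLt
  by_cases h : (v : ℕ) % 4 = 1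
  · exact ⟨⟨v + 1, by omega⟩, ⟨hv, Or.inr rfl⟩, by simp only; omega⟩
  · exact ⟨⟨v - 1, by omega⟩, ⟨hv, Or.inl (by simp only; omega)⟩, by simp only; omega⟩

def alternatingPathColoring (k : ℕ) (v : Fin (4 * k + 1)) : Fin (k + 2) :=
  if h : (v : ℕ) % 4 = 2 then ⟨v / 4 + 2, by have := v.isLt; omega⟩ else ⟨v % 2, by omega⟩

namespace alternatingPathColoring

variable {k : ℕ}

theorem val_eq_one_iff (v : Fin (4 * k + 1)) :
    (alternatingPathColoring k v : ℕ) = 1 ↔ (v : ℕ) % 2 = 1 := by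
  unfold alternatingPathColoring
  split_ifs <;> simp only; omega

theorem eq_of_mod_four_eq_two {u w : Fin (4 * k + 1)} (hw : (w : ℕ) % 4 = 2)
    (h : alternatingPathColoring k u = alternatingPathColoring k w) : u = w := by
  unfold alternatingPathColoring at h
  split_ifs at h <;> simp only [Fin.ext_iff] at h ⊢ <;> omega

theorem surjective (hk : 1 ≤ k) : Function.Surjective (alternatingPathColoring k) := by
  intro i
  have := i.isLt
  by_cases hi : (i : ℕ) < 2
  · refine ⟨⟨i, by omega⟩, ?_⟩
    simp only [alternatingPathColoring, Fin.ext_iff]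
    split_ifs <;> simp only <;> omega
  · refine ⟨⟨4 * (i - 2) + 2, by omega⟩, ?_⟩
    simp only [alternatingPathColoring, Fin.ext_iff]
    split_ifs <;> simp only <;> omega

theorem isDominatorColoring :
    IsDominatorColoring (alternatingPathArc (4 * k + 1)) (alternatingPathColoring k) := by
  refine .of_singleton_classes (fun u v ⟨hu, huv⟩ hc => ?_) (fun v ⟨_, hv, _⟩ => ?_)
  · have hv : (v : ℕ) % 2 = 1 := (val_eq_one_iff v).1 (hc ▸ (val_eq_one_iff u).2 hu)
    omega
  · obtain ⟨w, hvw, hw⟩ := exists_alternatingPathArc_mod_four_eq_two v hv (by omega)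
    exact ⟨w, hvw, fun u => eq_of_mod_four_eq_two hw⟩

end alternatingPathColoring

/-- For every `k ≥ 1`, the orientation of the path on `4k+1` vertices in
which every even-indexed vertex (odd index in the 0-based indexing used here) is a source
of out-degree two admits a dominator coloring using exactly `k+2` colors; hence its
dominator chromatic number is at most `k+2`. -/
theorem domChrom_alternating_path_le (k : ℕ) (hk : 1 ≤ k) :
    (∃ c : Fin (4 * k + 1) → Fin (k + 2),
        IsDominatorColoring
          (fun i j : Fin (4 * k + 1) =>
            (i : ℕ) % 2 = 1 ∧ ((j : ℕ) + 1 = (i : ℕ) ∨ (j : ℕ) = (i : ℕ) + 1)) c ∧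
        Function.Surjective c) ∧
    domChrom
        (fun i j : Fin (4 * k + 1) =>
          (i : ℕ) % 2 = 1 ∧ ((j : ℕ) + 1 = (i : ℕ) ∨ (j : ℕ) = (i : ℕ) + 1)) ≤ k + 2 := by
  have hc := alternatingPathColoring.isDominatorColoring (k := k)
  exact ⟨⟨_, hc, alternatingPathColoring.surjective hk⟩, domChrom_le_of_isDominatorColoring hc⟩
end

section
/- For every m ≥ 3 with m ≠ 4, the minimum dominator chromatic number over all orientations of the path P_m on m vertices is at most the minimum dominator chromatic number over all orientations of the cycle C_m on m vertices; that is, χ_d(P_m) ≤ χ_d(C_m). -/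
open SimpleGraph

section General

variable {V W : Type*} {A : V → V → Prop} {k : ℕ} {c : V → Fin k}

def deleteArc (A : V → V → Prop) (t h : V) : V → V → Prop :=
  fun u v => A u v ∧ ¬(u = t ∧ v = h)

theorem IsDominatorColoring.deleteArc_of_forall_eq {t h : V} (hc : IsDominatorColoring A c)
    (hout : ∀ u, A t u → u = h) : IsDominatorColoring (deleteArc A t h) c := by
  refine ⟨fun u v huv => hc.1 u v huv.1, ?_⟩
  rintro v ⟨u, hvu, hne⟩
  have hvt : v ≠ t := fun hvt => hne ⟨hvt, hout u (hvt ▸ hvu)⟩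
  obtain ⟨i, hi, hdom⟩ := hc.2 v ⟨u, hvu⟩
  exact ⟨i, hi, fun w hw => ⟨hdom w hw, fun hw' => hvt hw'.1⟩⟩

theorem IsDominatorColoring.deleteArc_of_dominates {t h : V} (hc : IsDominatorColoring A c)
    {i : Fin k} (hi : ∃ u, c u = i) (hdom : ∀ u, c u = i → A t u) (hhi : c h ≠ i) :
    IsDominatorColoring (deleteArc A t h) c := by
  refine ⟨fun u v huv => hc.1 u v huv.1, ?_⟩
  rintro v ⟨u, hvu, -⟩
  by_cases hvt : v = t
  · subst hvt
    exact ⟨i, hi, fun w hw => ⟨hdom w hw, fun hw' => hhi (hw'.2 ▸ hw)⟩⟩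
  · obtain ⟨j, hj, hdom'⟩ := hc.2 v ⟨u, hvu⟩
    exact ⟨j, hj, fun w hw => ⟨hdom' w hw, fun hw' => hvt hw'.1⟩⟩

theorem IsDominatorColoring.outNbhd_eq_colorClass {t x : V} (hc : IsDominatorColoring A c)
    (hx : A t x) (hstuck : ∀ y, A t y → ¬IsDominatorColoring (deleteArc A t y) c) :
    (∀ u, A t u ↔ c u = c x) ∧ ∃ y ≠ x, A t y := by
  obtain ⟨i, hi, hdom⟩ := hc.2 t ⟨x, hx⟩
  have hcol : ∀ y, A t y → c y = i := fun y hy =>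
    by_contra fun hyi => hstuck y hy (hc.deleteArc_of_dominates hi hdom hyi)
  refine ⟨fun u => ⟨fun hu => (hcol u hu).trans (hcol x hx).symm,
    fun hu => hdom u (hu.trans (hcol x hx))⟩, ?_⟩
  by_contra! honly
  exact hstuck x hx (hc.deleteArc_of_forall_eq fun u hu => by_contra fun hux => honly u hux hu)

theorem IsDominatorColoring.comp_equiv (hc : IsDominatorColoring A c) (e : W ≃ V) :
    IsDominatorColoring (fun u v => A (e u) (e v)) (c ∘ e) := by
  refine ⟨fun u v huv => hc.1 _ _ huv, ?_⟩
  rintro v ⟨u, hvu⟩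
  obtain ⟨i, ⟨w, hw⟩, hdom⟩ := hc.2 (e v) ⟨e u, hvu⟩
  exact ⟨i, ⟨e.symm w, by simpa using hw⟩, fun u hu => hdom (e u) hu⟩

theorem isDominatorColoring_of_injective (hA : ∀ u, ¬A u u) (hc : Function.Injective c) :
    IsDominatorColoring A c := by
  refine ⟨fun u v huv hcuv => hA u (hc hcuv ▸ huv), ?_⟩
  rintro v ⟨u, hvu⟩
  exact ⟨c u, ⟨u, rfl⟩, fun w hw => hc hw ▸ hvu⟩

variable {G : SimpleGraph V}

theorem IsOrientation.irrefl (hA : IsOrientation G A) (u : V) : ¬A u u :=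
  fun h => (hA u u).2 ⟨h, h⟩

theorem exists_isOrientation [LinearOrder V] (G : SimpleGraph V) : ∃ A, IsOrientation G A := by
  refine ⟨fun u v => G.Adj u v ∧ u < v, fun u v => ⟨⟨fun huv => ?_, ?_⟩, ?_⟩⟩
  · rcases huv.ne.lt_or_gt with h | h
    exacts [Or.inl ⟨huv, h⟩, Or.inr ⟨huv.symm, h⟩]
  · rintro (⟨h, -⟩ | ⟨h, -⟩)
    exacts [h, h.symm]
  · rintro ⟨⟨-, h₁⟩, -, h₂⟩
    exact h₁.asymm h₂

theorem IsOrientation.deleteArc {t h : V} (hA : IsOrientation G A) (hth : A t h) :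
    IsOrientation (G.deleteEdges {s(t, h)}) (deleteArc A t h) := by
  intro u v
  have huv := hA u v
  have hht := (hA t h).2
  simp only [_root_.deleteArc, deleteEdges_adj, Set.mem_singleton_iff, Sym2.eq_iff]
  grind

theorem IsOrientation.comp_iso {G' : SimpleGraph W} (hA : IsOrientation G A) (e : G' ≃g G) :
    IsOrientation G' (fun u v => A (e u) (e v)) := fun u v => by
  simpa only [e.map_adj_iff] using hA (e u) (e v)

theorem minOrientDomChrom_le_of_forall {m : ℕ} {H : SimpleGraph (Fin m)}
    (h : ∀ k A (c : Fin m → Fin k), IsOrientation H A → IsDominatorColoring A c →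
      ∃ A', IsOrientation G A' ∧ ∃ c' : V → Fin k, IsDominatorColoring A' c') :
    minOrientDomChrom G ≤ minOrientDomChrom H := by
  obtain ⟨A₀, hA₀⟩ := exists_isOrientation H
  obtain ⟨A, hA, c, hc⟩ := Nat.sInf_mem (s := {k | ∃ A, IsOrientation H A ∧
    ∃ c : Fin m → Fin k, IsDominatorColoring A c})
    ⟨m, A₀, hA₀, id, isDominatorColoring_of_injective hA₀.irrefl Function.injective_id⟩
  exact Nat.sInf_le (h _ A c hA hc)

end General

section Cycle

variable {n : ℕ}

theorem pathGraph_eq_cycleGraph_deleteEdges :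
    pathGraph (n + 3) = (cycleGraph (n + 3)).deleteEdges {s(Fin.last _, 0)} := by
  ext u v
  simp only [pathGraph_adj, deleteEdges_adj, cycleGraph_adj, sub_eq_iff_eq_add',
    Set.mem_singleton_iff, Sym2.eq_iff, Fin.ext_iff, Fin.val_add_one, Fin.val_last, Fin.val_zero]
  split_ifs <;> omega

theorem cycleGraph_adj_add_right {u v d : Fin (n + 2)} :
    (cycleGraph (n + 2)).Adj (u + d) (v + d) ↔ (cycleGraph (n + 2)).Adj u v := by
  simp only [cycleGraph_adj, add_sub_add_right_eq_sub]

theorem nonempty_iso_pathGraph_cycleGraph_deleteEdges {t h : Fin (n + 3)}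
    (hth : (cycleGraph (n + 3)).Adj t h) :
    Nonempty (pathGraph (n + 3) ≃g (cycleGraph (n + 3)).deleteEdges {s(t, h)}) := by
  obtain ⟨d, hd⟩ : ∃ d, s(t, h) = s(Fin.last _ + d, 0 + d) := by
    have hlast : Fin.last (n + 2) = -1 := eq_neg_of_add_eq_zero_left (Fin.last_add_one _)
    simp only [hlast, zero_add]
    rcases cycleGraph_adj.1 hth with hd | hd
    · exact ⟨t, by rw [Sym2.eq_swap, neg_add_eq_sub, ← hd, sub_sub_cancel]⟩
    · exact ⟨h, by rw [neg_add_eq_sub, ← hd, sub_sub_cancel]⟩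
  rw [pathGraph_eq_cycleGraph_deleteEdges, hd]
  exact ⟨⟨Equiv.addRight d, by
    simp only [Equiv.coe_addRight, deleteEdges_adj, cycleGraph_adj_add_right,
      Set.mem_singleton_iff, Sym2.eq_iff, add_left_inj, implies_true]⟩⟩

open Fin.CommRing in
theorem exists_isDominatorColoring_deleteArc_of_cycleGraph (hn : n ≠ 1)
    {A : Fin (n + 3) → Fin (n + 3) → Prop} {k : ℕ} {c : Fin (n + 3) → Fin k}
    (hA : IsOrientation (cycleGraph (n + 3)) A) (hc : IsDominatorColoring A c) :
    ∃ t h, A t h ∧ IsDominatorColoring (deleteArc A t h) c := by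
  by_contra! hstuck
  have hnbr : ∀ {t u}, A t u → u = t - 1 ∨ u = t + 1 := fun {t u} htu => by
    simpa [← mem_neighborSet, cycleGraph_neighborSet] using (hA t u).1.2 (Or.inl htu)
  have hboth : ∀ {t x}, A t x → A t (t - 1) ∧ A t (t + 1) := fun {t x} hx => by
    obtain ⟨-, y, hyx, hy⟩ := hc.outNbhd_eq_colorClass hx (hstuck t)
    rcases hnbr hx with rfl | rfl <;> rcases hnbr hy with rfl | rfl <;> tauto
  have hadj : ∀ t : Fin (n + 3), (cycleGraph (n + 3)).Adj t (t + 1) := fun t => by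
    simp [cycleGraph_adj]
  obtain ⟨t, x, hx⟩ : ∃ t x, A t x := by
    rcases (hA 0 1).1.1 (hadj 0) with h | h
    exacts [⟨_, _, h⟩, ⟨_, _, h⟩]
  have hback : A (t + 1 + 1) (t + 1) := by
    refine ((hA _ _).1.1 (hadj (t + 1))).resolve_left fun h => (hA t (t + 1)).2 ⟨(hboth hx).2, ?_⟩
    simpa using (hboth h).1
  have hclass_t := (hc.outNbhd_eq_colorClass (hboth hx).2 (hstuck t)).1
  have hclass_next := (hc.outNbhd_eq_colorClass hback (hstuck _)).1
  have hfar : A (t + 1 + 1) (t - 1) := (hclass_next _).2 ((hclass_t _).1 (hboth hx).1)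
  rcases hnbr hfar with h | h
  · have h2 : ((2 : ℕ) : Fin (n + 3)) = 0 := by push_cast; linear_combination -h
    have := Nat.le_of_dvd two_pos (Fin.natCast_eq_zero.1 h2)
    omega
  · have h4 : ((4 : ℕ) : Fin (n + 3)) = 0 := by push_cast; linear_combination -h
    have h4' := Fin.natCast_eq_zero.1 h4
    obtain rfl : n = 0 := by have := Nat.le_of_dvd four_pos h4'; omega
    omega

end Cycle

/-- For every `m ≥ 3` with `m ≠ 4`, the minimum dominator chromatic number
over all orientations of `P_m` is at most that of `C_m`. -/
theorem minOrientDomChrom_path_le_cycle (m : ℕ) (h3 : 3 ≤ m) (h4 : m ≠ 4) :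
    minOrientDomChrom (SimpleGraph.pathGraph m) ≤
      minOrientDomChrom (SimpleGraph.cycleGraph m) := by
  obtain ⟨n, rfl⟩ : ∃ n, m = n + 3 := ⟨m - 3, by omega⟩
  refine minOrientDomChrom_le_of_forall fun k A c hA hc => ?_
  obtain ⟨t, h, hth, hdel⟩ := exists_isDominatorColoring_deleteArc_of_cycleGraph (by omega) hA hc
  obtain ⟨e⟩ := nonempty_iso_pathGraph_cycleGraph_deleteEdges ((hA t h).1.2 (Or.inl hth))
  exact ⟨_, (hA.deleteArc hth).comp_iso e, _, hdel.comp_equiv e.toEquiv⟩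
end
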